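/- arXiv:2105.05741 — 2 statements merged into one kernel-verified Lean document; each statement's English description precedes it below -/
import Mathlib

section
/- There exists a C^∞ function Ψ₁ : ℝ → ℂ such that for all v > 0, Φ₁(v) = k_s² e^{i k_s v}/(4πω² v) + (k_p² − k_s²)/(8πω² v) + Ψ₁(v). In other words, the three-dimensional kernel component Φ₁ differs from the explicit singular part k_s² e^{i k_s v}/(4πω² v) + (k_p² − k_s²)/(8πω² v) by a function that extends smoothly across v = 0. -/
open scoped BigOperators ENNReal
open MeasureTheory

/-- The component `Φ₁` of the fundamental tensor of the Lamé operator `Δ* + ω²I`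
in dimension 3. -/
noncomputable def Phi1 (ω ks kp : ℝ) (v : ℝ) : ℂ :=
  (ks ^ 2 : ℝ) * Complex.exp (Complex.I * ks * v) / (4 * Real.pi * ω ^ 2 * v)
  + (Complex.I * ks * Complex.exp (Complex.I * ks * v)
      - Complex.I * kp * Complex.exp (Complex.I * kp * v)) / (4 * Real.pi * ω ^ 2 * v ^ 2)
  - (Complex.exp (Complex.I * ks * v) - Complex.exp (Complex.I * kp * v))
      / (4 * Real.pi * ω ^ 2 * v ^ 3)

/-- The component `Φ₂` of the fundamental tensor of the Lamé operator `Δ* + ω²I`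
in dimension 3. -/
noncomputable def Phi2 (ω ks kp : ℝ) (v : ℝ) : ℂ :=
  (1 / (4 * Real.pi * ω ^ 2 : ℝ)) *
    (-(((ks ^ 2 : ℝ) * Complex.exp (Complex.I * ks * v)
          - (kp ^ 2 : ℝ) * Complex.exp (Complex.I * kp * v)) / v)
      - 3 * ((Complex.I * ks * Complex.exp (Complex.I * ks * v)
          - Complex.I * kp * Complex.exp (Complex.I * kp * v)) / (v ^ 2 : ℝ))
      + 3 * ((Complex.exp (Complex.I * ks * v) - Complex.exp (Complex.I * kp * v))
          / (v ^ 3 : ℝ)))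

/-- The entries `Φ_{αβ}(x) = Φ₁(|x|) δ_{αβ} + Φ₂(|x|) x_α x_β/|x|²` of the
three-dimensional fundamental tensor of the Lamé operator. -/
noncomputable def PhiE (ω ks kp : ℝ) (α β : Fin 3) (x : EuclideanSpace ℝ (Fin 3)) : ℂ :=
  Phi1 ω ks kp ‖x‖ * (if α = β then 1 else 0)
    + Phi2 ω ks kp ‖x‖ * ((x α * x β / ‖x‖ ^ 2 : ℝ) : ℂ)

open Complex

noncomputable def Nfun : ℂ → ℂ := fun z => z * Complex.exp z - Complex.exp z + 1 - z ^ 2 / 2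

lemma Nfun_bound {z : ℂ} (hz : ‖z‖ ≤ 1) :
    ‖Nfun z‖ ≤ ‖z‖ ^ 3 := by
  have h := Complex.exp_bound hz (n := 3) (by norm_num)
  have hsum : (∑ m ∈ Finset.range 3, z ^ m / m.factorial) = 1 + z + z ^ 2 / 2 := by
    norm_num [Finset.sum_range_succ]
  rw [hsum] at h
  norm_num [Nat.factorial] at h
  have hNz : Nfun z = z ^ 3 / 2 + (z - 1) * (Complex.exp z - (1 + z + z ^ 2 / 2)) := by
    simp only [Nfun]; ring
  have hz1 : ‖z - 1‖ ≤ 2 := by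
    calc ‖z - 1‖ ≤ ‖z‖ + ‖(1 : ℂ)‖ := by
          simpa using norm_sub_le z 1
      _ ≤ 2 := by simp; linarith
  calc ‖Nfun z‖
      ≤ ‖z ^ 3 / 2‖ + ‖(z - 1) * (Complex.exp z - (1 + z + z ^ 2 / 2))‖ := by
        rw [hNz]; exact norm_add_le _ _
    _ ≤ ‖z‖ ^ 3 / 2 + 2 * (‖z‖ ^ 3 * (2 / 9)) := by
        rw [norm_div, norm_mul, norm_pow]
        simp only [Complex.norm_ofNat]
        gcongr ?_ + ?_
        · norm_num
        · exact mul_le_mul hz1 h (norm_nonneg _) (by norm_num)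
    _ ≤ ‖z‖ ^ 3 := by nlinarith [pow_nonneg (norm_nonneg z) 3]

noncomputable def gfun : ℂ → ℂ :=
  Function.update (fun z => Nfun z / z ^ 3) 0
    (Filter.limUnder (nhdsWithin 0 {(0 : ℂ)}ᶜ) (fun z => Nfun z / z ^ 3))

lemma gfun_eq {z : ℂ} (hz : z ≠ 0) : gfun z = Nfun z / z ^ 3 :=
  Function.update_of_ne hz _ _

lemma Nfun_differentiable : Differentiable ℂ Nfun := by
  unfold Nfun
  fun_prop

lemma gfun_differentiable : Differentiable ℂ gfun := by
  have hdf : DifferentiableOn ℂ (fun z => Nfun z / z ^ 3) {(0 : ℂ)}ᶜ := by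
    intro z hz
    exact ((Nfun_differentiable z).div (differentiable_pow 3 z)
      (pow_ne_zero 3 hz)).differentiableWithinAt
  have hball : Metric.ball (0 : ℂ) 1 ∈ nhds (0 : ℂ) :=
    Metric.ball_mem_nhds 0 one_pos
  have hbdd : BddAbove (norm ∘ (fun z => Nfun z / z ^ 3) '' (Metric.ball (0 : ℂ) 1 \ {0})) := by
    refine ⟨1, ?_⟩
    rintro y ⟨z, ⟨hz1, hz0⟩, rfl⟩
    simp only [Function.comp_apply, norm_div, norm_pow]
    have hz0' : z ≠ 0 := by simpa using hz0
    have habs : ‖z‖ ≤ 1 := le_of_lt (by simpa [Complex.dist_eq] using hz1)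
    rw [div_le_one (pow_pos (norm_pos_iff.mpr hz0') 3)]
    simpa using Nfun_bound habs
  have H := Complex.differentiableOn_update_limUnder_of_bddAbove hball
    (hdf.mono (by intro z hz; exact hz.2)) hbdd
  intro z
  by_cases hz : z = 0
  · subst hz
    exact (H.differentiableAt (Metric.isOpen_ball.mem_nhds (Metric.mem_ball_self one_pos)))
  · have : DifferentiableOn ℂ gfun {(0 : ℂ)}ᶜ := by
      refine hdf.congr ?_
      intro w hw
      exact gfun_eq (by simpa using hw)
    exact this.differentiableAt (isOpen_compl_singleton.mem_nhds hz)


/-- The three-dimensional kernel component `Φ₁` differs from the explicit singular part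
`k_s² e^{i k_s v}/(4πω² v) + (k_p² − k_s²)/(8πω² v)` by a function `Ψ₁` that extends
smoothly (`C^∞`) across `v = 0`. -/
theorem Phi1_smooth_decomposition (ω lam μ : ℝ)
    (hω : 0 < ω) (hμ : 0 < μ) (hlam : 0 < 2 * μ + lam)
    (kp ks : ℝ) (hkp : kp = ω / Real.sqrt (2 * μ + lam)) (hks : ks = ω / Real.sqrt μ) :
    ∃ Ψ₁ : ℝ → ℂ, ContDiff ℝ (⊤ : ℕ∞) Ψ₁ ∧
      ∀ v : ℝ, 0 < v →
        Phi1 ω ks kp v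
          = (ks ^ 2 : ℝ) * Complex.exp (Complex.I * ks * v) / (4 * Real.pi * ω ^ 2 * v)
            + ((kp ^ 2 - ks ^ 2) / (8 * Real.pi * ω ^ 2 * v) : ℝ)
            + Ψ₁ v := by
  have hks : 0 < ks := by
    rw [hks]; exact div_pos hω (Real.sqrt_pos.mpr hμ)
  have hkp : 0 < kp := by
    rw [hkp]; exact div_pos hω (Real.sqrt_pos.mpr hlam)
  refine ⟨fun v => (1 / (4 * Real.pi * ω ^ 2) : ℂ) *
      ((Complex.I * ks) ^ 3 * gfun (Complex.I * ks * v)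
        - (Complex.I * kp) ^ 3 * gfun (Complex.I * kp * v)), ?_, ?_⟩
  · have hg : ContDiff ℝ (⊤ : ℕ∞) gfun :=
      (gfun_differentiable.contDiff).restrict_scalars ℝ
    have hin : ∀ k : ℝ, ContDiff ℝ (⊤ : ℕ∞) (fun v : ℝ => Complex.I * k * v) := by
      intro k
      exact contDiff_const.mul Complex.ofRealCLM.contDiff
    exact contDiff_const.mul ((contDiff_const.mul (hg.comp (hin ks))).sub
      (contDiff_const.mul (hg.comp (hin kp))))
  · intro v hv
    have hvC : (v : ℂ) ≠ 0 := Complex.ofReal_ne_zero.mpr hv.ne'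
    have hzs : Complex.I * ks * v ≠ 0 :=
      mul_ne_zero (mul_ne_zero Complex.I_ne_zero (Complex.ofReal_ne_zero.mpr hks.ne')) hvC
    have hzp : Complex.I * kp * v ≠ 0 :=
      mul_ne_zero (mul_ne_zero Complex.I_ne_zero (Complex.ofReal_ne_zero.mpr hkp.ne')) hvC
    have hπ : (Real.pi : ℂ) ≠ 0 := Complex.ofReal_ne_zero.mpr Real.pi_ne_zero
    have hωC : (ω : ℂ) ≠ 0 := Complex.ofReal_ne_zero.mpr hω.ne'
    have key : ∀ k : ℝ, k ≠ 0 →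
        (Complex.I * k) ^ 3 * (Nfun (Complex.I * k * v) / (Complex.I * k * v) ^ 3)
          = Nfun (Complex.I * k * v) / (v : ℂ) ^ 3 := by
      intro k hk
      have hkC : (k : ℂ) ≠ 0 := Complex.ofReal_ne_zero.mpr hk
      rw [mul_pow, mul_pow]
      field_simp
    simp only [gfun_eq hzs, gfun_eq hzp, key ks hks.ne', key kp hkp.ne']
    have hsq : ∀ k : ℝ, (Complex.I * k * v) ^ 2 = -((k : ℂ) ^ 2 * (v : ℂ) ^ 2) := by
      intro k
      rw [mul_pow, mul_pow, Complex.I_sq]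
      ring
    simp only [Phi1, Nfun, hsq]
    push_cast
    set p : ℂ := (Real.pi : ℂ) with hp'
    set w : ℂ := (ω : ℂ) with hw'
    set u : ℂ := (v : ℂ) with hu'
    have hD : (8 : ℂ) * p * w ^ 2 * u ^ 3 ≠ 0 :=
      mul_ne_zero (mul_ne_zero (mul_ne_zero (by norm_num) hπ) (pow_ne_zero 2 hωC))
        (pow_ne_zero 3 hvC)
    have h1 : (4 : ℂ) * p * w ^ 2 * u ≠ 0 :=
      mul_ne_zero (mul_ne_zero (mul_ne_zero (by norm_num) hπ) (pow_ne_zero 2 hωC)) hvC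
    have h2 : (4 : ℂ) * p * w ^ 2 * u ^ 2 ≠ 0 :=
      mul_ne_zero (mul_ne_zero (mul_ne_zero (by norm_num) hπ) (pow_ne_zero 2 hωC))
        (pow_ne_zero 2 hvC)
    have h3 : (4 : ℂ) * p * w ^ 2 * u ^ 3 ≠ 0 :=
      mul_ne_zero (mul_ne_zero (mul_ne_zero (by norm_num) hπ) (pow_ne_zero 2 hωC))
        (pow_ne_zero 3 hvC)
    have h4 : (8 : ℂ) * p * w ^ 2 * u ≠ 0 :=
      mul_ne_zero (mul_ne_zero (mul_ne_zero (by norm_num) hπ) (pow_ne_zero 2 hωC)) hvC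
    have e1 : ∀ a : ℂ, a / (4 * p * w ^ 2 * u) = a * (2 * u ^ 2) / (8 * p * w ^ 2 * u ^ 3) := by
      intro a; rw [div_eq_div_iff h1 hD]; ring
    have e2 : ∀ a : ℂ, a / (4 * p * w ^ 2 * u ^ 2) = a * (2 * u) / (8 * p * w ^ 2 * u ^ 3) := by
      intro a; rw [div_eq_div_iff h2 hD]; ring
    have e3 : ∀ a : ℂ, a / (4 * p * w ^ 2 * u ^ 3) = a * 2 / (8 * p * w ^ 2 * u ^ 3) := by
      intro a; rw [div_eq_div_iff h3 hD]; ring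
    have e4 : ∀ a : ℂ, a / (8 * p * w ^ 2 * u) = a * u ^ 2 / (8 * p * w ^ 2 * u ^ 3) := by
      intro a; rw [div_eq_div_iff h4 hD]; ring
    have e5 : ∀ a : ℂ, 1 / (4 * p * w ^ 2) * (a / u ^ 3) = a * 2 / (8 * p * w ^ 2 * u ^ 3) := by
      intro a; rw [div_mul_div_comm, one_mul, e3]
    simp only [div_sub_div_same]
    simp only [e1, e2, e3, e4, e5]
    simp only [← add_div, div_sub_div_same]
    ring
end

section
/- There exists a C^∞ function Ψ₂ : ℝ → ℂ such that for all v > 0, Φ₂(v) = (k_s² − k_p²)/(8πω² v) + Ψ₂(v); moreover, if k_p = k_s then Ψ₂ is identically zero. In other words, the three-dimensional kernel component Φ₂ differs from the explicit singular part (k_s² − k_p²)/(8πω² v) by a function that extends smoothly across v = 0. -/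
open scoped BigOperators ENNReal
open MeasureTheory

noncomputable def Gfun : ℂ → ℂ := fun w => Complex.exp w * (w ^ 2 - 3 * w + 3) - 3 + w ^ 2 / 2

noncomputable def Gfun' : ℂ → ℂ := fun w => Complex.exp w * (w ^ 2 - w) + w

lemma hasDerivAt_Gfun (w : ℂ) : HasDerivAt Gfun (Gfun' w) w := by
  have h1 : HasDerivAt (fun w : ℂ => w ^ 2 - 3 * w + 3) (2 * w - 3) w := by
    have := ((hasDerivAt_pow 2 w).sub ((hasDerivAt_id w).const_mul 3)).add_const 3
    refine this.congr_deriv ?_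
    push_cast
    ring
  have h3 : HasDerivAt (fun w : ℂ => w ^ 2 / 2) w w := by
    have := (hasDerivAt_pow 2 w).div_const 2
    refine this.congr_deriv ?_
    push_cast
    ring
  have h := (((Complex.hasDerivAt_exp w).mul h1).sub_const 3).add h3
  refine h.congr_deriv ?_
  simp only [Gfun']
  ring

lemma hasDerivAt_Gfun' (w : ℂ) :
    HasDerivAt Gfun' (Complex.exp w * (w ^ 2 + w - 1) + 1) w := by
  have h1 : HasDerivAt (fun w : ℂ => w ^ 2 - w) (2 * w - 1) w := by
    have := (hasDerivAt_pow 2 w).sub (hasDerivAt_id w)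
    refine this.congr_deriv ?_
    push_cast
    ring
  have h := ((Complex.hasDerivAt_exp w).mul h1).add (hasDerivAt_id w)
  refine h.congr_deriv ?_
  ring

lemma Gfun_zero : Gfun 0 = 0 := by
  simp [Gfun, Complex.exp_zero]

lemma Gfun'_zero : Gfun' 0 = 0 := by
  simp [Gfun']

noncomputable def Dfun (a b : ℂ) : ℂ → ℂ := fun z => Gfun (a * z) - Gfun (b * z)

lemma hasDerivAt_comp_Gfun (a z : ℂ) :
    HasDerivAt (fun z => Gfun (a * z)) (a * Gfun' (a * z)) z := by
  have h2 : HasDerivAt (fun y : ℂ => a * y) a z := by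
    simpa using (hasDerivAt_id z).const_mul a
  have := (hasDerivAt_Gfun (a * z)).comp z h2
  refine this.congr_deriv ?_
  ring

lemma hasDerivAt_Dfun (a b z : ℂ) :
    HasDerivAt (Dfun a b) (a * Gfun' (a * z) - b * Gfun' (b * z)) z :=
  (hasDerivAt_comp_Gfun a z).sub (hasDerivAt_comp_Gfun b z)

lemma Dfun_diff (a b : ℂ) : Differentiable ℂ (Dfun a b) :=
  fun z => (hasDerivAt_Dfun a b z).differentiableAt

lemma Dfun_zero (a b : ℂ) : Dfun a b 0 = 0 := by
  simp [Dfun]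

lemma deriv_Dfun (a b : ℂ) :
    deriv (Dfun a b) = fun z => a * Gfun' (a * z) - b * Gfun' (b * z) :=
  funext fun z => (hasDerivAt_Dfun a b z).deriv

lemma deriv_Dfun_zero (a b : ℂ) : deriv (Dfun a b) 0 = 0 := by
  rw [deriv_Dfun]
  simp [Gfun'_zero]

lemma hasDerivAt_deriv_Dfun_zero (a b : ℂ) : HasDerivAt (deriv (Dfun a b)) 0 0 := by
  rw [deriv_Dfun]
  have hc : ∀ c : ℂ, HasDerivAt (fun z : ℂ => c * Gfun' (c * z))
      (c * (c * (Complex.exp (c * 0) * ((c*0) ^ 2 + (c*0) - 1) + 1))) 0 := by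
    intro c
    have h2 : HasDerivAt (fun y : ℂ => c * y) c 0 := by
      simpa using (hasDerivAt_id (0:ℂ)).const_mul c
    have := ((hasDerivAt_Gfun' (c * 0)).comp 0 h2).const_mul c
    refine this.congr_deriv ?_
    ring
  have := (hc a).sub (hc b)
  refine this.congr_deriv ?_
  simp [Complex.exp_zero]

lemma dslope_entire {f : ℂ → ℂ} (hf : Differentiable ℂ f) :
    Differentiable ℂ (dslope f 0) := by
  intro z
  rcases eq_or_ne z 0 with rfl | hz
  · obtain ⟨p, hp⟩ := hf.analyticAt 0
    exact (AnalyticAt.differentiableAt ⟨_, hp.has_fpower_series_dslope_fslope⟩)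
  · exact (differentiableAt_dslope_of_ne hz).mpr (hf z)

lemma deriv_dslope_zero {f : ℂ → ℂ} (hf : Differentiable ℂ f)
    (h2 : HasDerivAt (deriv f) 0 0) : deriv (dslope f 0) 0 = 0 := by
  obtain ⟨p, hp⟩ := hf.analyticAt 0
  have hd := hp.has_fpower_series_dslope_fslope
  rw [hd.deriv]
  -- show (fslope p) 1 (fun _ => 1) = 0, which is p.coeff 2
  obtain ⟨r, hr⟩ := hp
  have hfd := hr.fderiv
  have hg := hfd.hasFPowerSeriesAt.hasDerivAt
  have h1 : HasDerivAt (fun z => fderiv ℂ f z 1) ((p.derivSeries 1 fun _ => 1) 1) 0 := by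
    have := hg.clm_apply (hasDerivAt_const (0:ℂ) (1:ℂ))
    simpa using this
  have heq : (fun z => fderiv ℂ f z 1) = deriv f := by
    funext z; rw [fderiv_apply_one_eq_deriv]
  rw [heq] at h1
  have hval : (p.derivSeries 1 fun _ => 1) 1 = 0 := h1.unique h2
  have hdiag := p.derivSeries_apply_diag 1 (1 : ℂ)
  rw [hdiag] at hval
  have hc2 : p 2 (fun _ => 1) = 0 := by
    have : ((1:ℕ) + 1 : ℕ) • p 2 (fun _ => (1:ℂ)) = 0 := hval
    simpa using this
  have : (p.fslope) 1 (fun _ => 1) = (p.fslope).coeff 1 := rfl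
  rw [this, FormalMultilinearSeries.coeff_fslope]
  show p 2 (fun _ => 1) = 0
  exact hc2

noncomputable def Hfun (a b : ℂ) : ℂ → ℂ :=
  dslope (dslope (dslope (Dfun a b) 0) 0) 0

lemma Hfun_diff (a b : ℂ) : Differentiable ℂ (Hfun a b) :=
  dslope_entire (dslope_entire (dslope_entire (Dfun_diff a b)))

lemma dslope1_zero (a b : ℂ) : dslope (Dfun a b) 0 0 = 0 := by
  rw [dslope_same]; exact deriv_Dfun_zero a b

lemma dslope2_zero (a b : ℂ) : dslope (dslope (Dfun a b) 0) 0 0 = 0 := by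
  rw [dslope_same]
  exact deriv_dslope_zero (Dfun_diff a b) (hasDerivAt_deriv_Dfun_zero a b)

lemma Hfun_eq (a b : ℂ) {z : ℂ} (hz : z ≠ 0) :
    Hfun a b z = Dfun a b z / z ^ 3 := by
  rw [Hfun, dslope_of_ne _ hz, slope_def_field, dslope_of_ne _ hz, slope_def_field,
    dslope_of_ne _ hz, slope_def_field, Dfun_zero, dslope1_zero, dslope2_zero]
  simp only [sub_zero]
  rw [div_div, div_div]
  congr 1
  ring

lemma dslope_zero_fun : dslope (fun _ : ℂ => (0 : ℂ)) 0 = fun _ => 0 := by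
  funext z
  rcases eq_or_ne z 0 with rfl | hz
  · rw [dslope_same]; simp
  · rw [dslope_of_ne _ hz, slope_def_field]; simp

lemma Hfun_self (a : ℂ) (z : ℂ) : Hfun a a z = 0 := by
  have h : Dfun a a = fun _ : ℂ => (0 : ℂ) := funext fun z => sub_self _
  rw [Hfun, h, dslope_zero_fun, dslope_zero_fun, dslope_zero_fun]

lemma Gfun_Ikv (k v : ℂ) :
    Gfun (Complex.I * k * v) =
      Complex.exp (Complex.I * k * v) * (-(k ^ 2 * v ^ 2) - 3 * (Complex.I * k * v) + 3)
        - 3 - k ^ 2 * v ^ 2 / 2 := by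
  simp only [Gfun]
  have h : (Complex.I * k * v) ^ 2 = -(k ^ 2 * v ^ 2) := by
    rw [mul_pow, mul_pow, Complex.I_sq]
    ring
  rw [h]
  ring

lemma Hfun_contDiff (a b : ℝ) :
    ContDiff ℝ (⊤ : ℕ∞) (fun v : ℝ => Hfun (Complex.I * a) (Complex.I * b) (v : ℂ)) := by
  have h1 : ContDiff ℂ (⊤ : ℕ∞) (Hfun (Complex.I * a) (Complex.I * b)) :=
    (Hfun_diff _ _).contDiff
  exact (h1.restrict_scalars ℝ).comp Complex.ofRealCLM.contDiff

/-- The three-dimensional kernel component `Φ₂` differs from the explicit singular part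
`(k_s² − k_p²)/(8πω² v)` by a function `Ψ₂` that extends smoothly (`C^∞`) across
`v = 0`; moreover `Ψ₂ ≡ 0` when `k_p = k_s`. -/
theorem Phi2_smooth_decomposition (ω lam μ : ℝ)
    (hω : 0 < ω) (hμ : 0 < μ) (hlam : 0 < 2 * μ + lam)
    (kp ks : ℝ) (hkp : kp = ω / Real.sqrt (2 * μ + lam)) (hks : ks = ω / Real.sqrt μ) :
    ∃ Ψ₂ : ℝ → ℂ, ContDiff ℝ (⊤ : ℕ∞) Ψ₂ ∧
      (∀ v : ℝ, 0 < v →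
        Phi2 ω ks kp v = ((ks ^ 2 - kp ^ 2) / (8 * Real.pi * ω ^ 2 * v) : ℝ) + Ψ₂ v) ∧
      (kp = ks → ∀ v : ℝ, Ψ₂ v = 0) := by
  refine ⟨fun v : ℝ => ((1 / (4 * Real.pi * ω ^ 2) : ℝ) : ℂ) *
      Hfun (Complex.I * ks) (Complex.I * kp) (v : ℂ), ?_, ?_, ?_⟩
  · exact contDiff_const.mul (Hfun_contDiff ks kp)
  · intro v hv
    have hvz : (v : ℂ) ≠ 0 := Complex.ofReal_ne_zero.mpr (ne_of_gt hv)
    dsimp only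
    rw [Hfun_eq _ _ hvz]
    have hπ : (Real.pi : ℂ) ≠ 0 := Complex.ofReal_ne_zero.mpr Real.pi_ne_zero
    have hωz : (ω : ℂ) ≠ 0 := Complex.ofReal_ne_zero.mpr (ne_of_gt hω)
    simp only [Dfun, Gfun_Ikv, Phi2]
    push_cast
    field_simp [hvz, hπ, hωz]
    ring
  · intro h v
    dsimp only
    rw [h, Hfun_self]
    simp
end
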